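/- arXiv:1805.02953 — 3 statements merged into one kernel-verified Lean document; each statement's English description precedes it below -/
import Mathlib

section
/- Let T be a bounded operator on a Hilbert space H that is bounded below and pure (i.e., ⋂_{n≥0} T^n H = {0}), with L = (T*T)^{-1}T* and P = Id - TL. If x ∈ H satisfies P L^n x = 0 for all n ≥ 0, then x = 0. -/
/-!
If `P Lⁿ x = 0` for every `n`, then `Lⁿ x = T Lⁿ⁺¹ x` for every `n`, so by induction
`x = Tⁿ Lⁿ x ∈ Tⁿ H` for every `n`, and purity forces `x = 0`.
-/

namespace ContinuousLinearMap

variable {R M : Type*} [Semiring R] [AddCommMonoid M] [TopologicalSpace M] [Module R M]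

theorem pow_apply_pow_apply_eq_self (T L : M →L[R] M) {x : M}
    (hx : ∀ n : ℕ, T (L ((L ^ n) x)) = (L ^ n) x) (n : ℕ) :
    (T ^ n) ((L ^ n) x) = x := by
  induction n with
  | zero => simp
  | succ n ih =>
    calc (T ^ (n + 1)) ((L ^ (n + 1)) x) = (T ^ n) (T (L ((L ^ n) x))) := by
          rw [pow_succ T, pow_succ' L]; rfl
      _ = x := by rw [hx n, ih]

end ContinuousLinearMap

theorem stmt_5_general {H : Type*} [NormedAddCommGroup H] [InnerProductSpace ℂ H]
    (T : H →L[ℂ] H)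
    (hpure : (⨅ n : ℕ, LinearMap.range ((T ^ n : H →L[ℂ] H) : H →ₗ[ℂ] H)) = ⊥)
    (L : H →L[ℂ] H)
    (P : H →L[ℂ] H) (hP : P = 1 - T * L)
    (x : H) (hx : ∀ n : ℕ, P ((L ^ n) x) = 0) :
    x = 0 := by
  have hTL : ∀ n : ℕ, T (L ((L ^ n) x)) = (L ^ n) x := fun n ↦ by
    have h := hx n
    rw [hP, sub_apply, one_apply_eq_self, sub_eq_zero] at h
    exact h.symm
  have hmem : x ∈ ⨅ n : ℕ, LinearMap.range ((T ^ n : H →L[ℂ] H) : H →ₗ[ℂ] H) :=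
    Submodule.mem_iInf _ |>.mpr fun n ↦ ⟨(L ^ n) x, T.pow_apply_pow_apply_eq_self L hTL n⟩
  rwa [hpure, Submodule.mem_bot] at hmem

/-- For `T` bounded below and pure (`⋂ₙ Tⁿ H = {0}`), with `L = (T*T)⁻¹T*` and `P = Id - TL`,
if `P Lⁿ x = 0` for all `n ≥ 0` then `x = 0`. -/
theorem stmt_5 {H : Type*} [NormedAddCommGroup H] [InnerProductSpace ℂ H] [CompleteSpace H]
    (T : H →L[ℂ] H) (h : ∃ C > (0 : ℝ), ∀ x : H, C * ‖x‖ ≤ ‖T x‖)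
    (hpure : (⨅ n : ℕ, LinearMap.range ((T ^ n : H →L[ℂ] H) : H →ₗ[ℂ] H)) = ⊥)
    (L : H →L[ℂ] H)
    (hL : L = Ring.inverse (ContinuousLinearMap.adjoint T * T) * ContinuousLinearMap.adjoint T)
    (P : H →L[ℂ] H) (hP : P = 1 - T * L)
    (x : H) (hx : ∀ n : ℕ, P ((L ^ n) x) = 0) :
    x = 0 :=
  stmt_5_general T hpure L P hP x hx
end

section
/- If T is a concave bounded operator on a Hilbert space H, then its spectral radius satisfies r(T) ≤ 1. -/
/-!
Concavity says that the increments `‖T^(n+1) x‖² - ‖T^n x‖²` are non-increasing in `n`, so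
`‖T^n x‖²` grows at most linearly and `‖T^n‖ = O(n)`. In a Banach algebra, powers of polynomial
growth force every spectral value `z` to satisfy `|z| ≤ 1`, because `|z|^n ≤ ‖a^n‖ ‖1‖`.
-/

open Filter Asymptotics

section PolynomialGrowth

variable {𝕜 A : Type*} [NormedField 𝕜] [NormedRing A] [NormedAlgebra 𝕜 A] [CompleteSpace A]
  {a : A} {k : ℕ}

theorem spectrum.norm_le_one_of_isBigO_norm_pow
    (ha : (fun n : ℕ ↦ ‖a ^ n‖) =O[atTop] fun n ↦ (n : ℝ) ^ k) {z : 𝕜}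
    (hz : z ∈ spectrum 𝕜 a) : ‖z‖ ≤ 1 := by
  by_contra! hz1
  have hpow : (fun n : ℕ ↦ ‖z‖ ^ n) =O[atTop] fun n ↦ ‖a ^ n‖ :=
    IsBigO.of_bound ‖(1 : A)‖ <| Eventually.of_forall fun n ↦ by
      simpa [mul_comm, ← norm_pow] using
        spectrum.norm_le_norm_mul_of_mem (spectrum.pow_mem_pow a n hz)
  refine isLittleO_irrefl (Eventually.frequently <| Eventually.of_forall fun n ↦ ?_)
    ((hpow.trans ha).trans_isLittleO (isLittleO_pow_const_const_pow_of_one_lt k hz1))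
  exact pow_ne_zero n (by positivity)

theorem spectralRadius_le_one_of_isBigO_norm_pow
    (ha : (fun n : ℕ ↦ ‖a ^ n‖) =O[atTop] fun n ↦ (n : ℝ) ^ k) : spectralRadius 𝕜 a ≤ 1 :=
  iSup₂_le fun _ hz ↦ by exact_mod_cast spectrum.norm_le_one_of_isBigO_norm_pow ha hz

end PolynomialGrowth

namespace ContinuousLinearMap

variable {𝕜 E : Type*} [NontriviallyNormedField 𝕜] [SeminormedAddCommGroup E] [NormedSpace 𝕜 E]

def IsConcave (T : E →L[𝕜] E) : Prop :=
  ∀ x, ‖(T ^ 2) x‖ ^ 2 + ‖x‖ ^ 2 ≤ 2 * ‖T x‖ ^ 2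

namespace IsConcave

variable {T : E →L[𝕜] E} (hT : T.IsConcave)
include hT

theorem norm_sq_pow_add_two_apply_add_le (n : ℕ) (x : E) :
    ‖(T ^ (n + 2)) x‖ ^ 2 + ‖(T ^ n) x‖ ^ 2 ≤ 2 * ‖(T ^ (n + 1)) x‖ ^ 2 := by
  simpa only [add_comm n, pow_add, pow_one, mul_apply_eq_comp] using hT ((T ^ n) x)

theorem norm_sq_pow_succ_apply_sub_le (n : ℕ) (x : E) :
    ‖(T ^ (n + 1)) x‖ ^ 2 - ‖(T ^ n) x‖ ^ 2 ≤ ‖T x‖ ^ 2 - ‖x‖ ^ 2 := by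
  induction n with
  | zero => simp
  | succ n ih => linarith [hT.norm_sq_pow_add_two_apply_add_le n x]

theorem norm_sq_pow_apply_le (n : ℕ) (x : E) :
    ‖(T ^ n) x‖ ^ 2 ≤ (1 + n * ‖T‖ ^ 2) * ‖x‖ ^ 2 := by
  induction n with
  | zero => simp
  | succ n ih =>
    have hTx : ‖T x‖ ^ 2 ≤ ‖T‖ ^ 2 * ‖x‖ ^ 2 := by
      rw [← mul_pow]
      gcongr
      exact T.le_opNorm x
    have := hT.norm_sq_pow_succ_apply_sub_le n x
    rw [Nat.cast_succ]
    nlinarith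

theorem norm_pow_le (n : ℕ) : ‖T ^ n‖ ≤ √(1 + n * ‖T‖ ^ 2) :=
  opNorm_le_bound _ (Real.sqrt_nonneg _) fun x ↦ by
    refine (pow_le_pow_iff_left₀ (norm_nonneg _) (by positivity) two_ne_zero).mp ?_
    rw [mul_pow, Real.sq_sqrt (by positivity)]
    exact hT.norm_sq_pow_apply_le n x

theorem isBigO_norm_pow : (fun n : ℕ ↦ ‖T ^ n‖) =O[atTop] fun n ↦ (n : ℝ) := by
  refine IsBigO.of_bound (1 + ‖T‖ ^ 2) <| (eventually_ge_atTop 1).mono fun n hn ↦ ?_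
  have hn : (1 : ℝ) ≤ n := by exact_mod_cast hn
  have h1 : 1 ≤ 1 + n * ‖T‖ ^ 2 := le_add_of_nonneg_right (by positivity)
  calc ‖‖T ^ n‖‖ = ‖T ^ n‖ := norm_norm _
    _ ≤ √(1 + n * ‖T‖ ^ 2) := hT.norm_pow_le n
    _ ≤ 1 + n * ‖T‖ ^ 2 := Real.sqrt_le_self_iff.mpr (.inr h1)
    _ ≤ (1 + ‖T‖ ^ 2) * ‖(n : ℝ)‖ := by
      rw [Real.norm_natCast]
      nlinarith [sq_nonneg ‖T‖]

end IsConcave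

end ContinuousLinearMap

/-- A concave bounded operator on a Hilbert space has spectral radius at most `1`. -/
theorem stmt_9 {H : Type*} [NormedAddCommGroup H] [InnerProductSpace ℂ H] [CompleteSpace H]
    (T : H →L[ℂ] H) (h : ∀ x : H, ‖(T ^ 2) x‖ ^ 2 + ‖x‖ ^ 2 ≤ 2 * ‖T x‖ ^ 2) :
    spectralRadius ℂ T ≤ 1 :=
  spectralRadius_le_one_of_isBigO_norm_pow (k := 1) <| by
    simpa only [pow_one] using ContinuousLinearMap.IsConcave.isBigO_norm_pow h
end

section
/- Every concave operator on a Hilbert space is bounded below: if ‖T²x‖² + ‖x‖² ≤ 2‖Tx‖² for all x, then ‖Tx‖ ≥ ‖x‖ for all x (so in particular T is injective with closed range). -/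
/-!
Along an orbit, `n ↦ ‖Tⁿ x‖²` is a concave sequence of nonnegative numbers. A concave sequence
lies below its first chord `a 0 + n (a 1 - a 0)`, so if it ever decreased it would tend to `-∞`;
being bounded below, it is therefore nondecreasing, and `‖x‖² ≤ ‖T x‖²` is its first step.
-/

section ConcaveSequence

variable {α : Type*} [AddCommGroup α] [LinearOrder α] [IsOrderedAddMonoid α] {a : ℕ → α}

theorem le_add_nsmul_sub_of_concave (hconc : ∀ n, a (n + 2) - a (n + 1) ≤ a (n + 1) - a n)
    (n : ℕ) : a n ≤ a 0 + n • (a 1 - a 0) := by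
  have hstep : ∀ n, a (n + 1) - a n ≤ a 1 - a 0 := by
    intro n
    induction n with
    | zero => exact le_rfl
    | succ k ih => exact (hconc k).trans ih
  induction n with
  | zero => simp
  | succ k ih =>
    calc a (k + 1) = a k + (a (k + 1) - a k) := by abel
      _ ≤ a 0 + k • (a 1 - a 0) + (a 1 - a 0) := add_le_add ih (hstep k)
      _ = a 0 + (k + 1) • (a 1 - a 0) := by rw [succ_nsmul, add_assoc]

theorem monotone_of_concave_of_bddBelow [Archimedean α]
    (hconc : ∀ n, a (n + 2) - a (n + 1) ≤ a (n + 1) - a n) (hbdd : BddBelow (Set.range a)) :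
    Monotone a := by
  obtain ⟨b, hb⟩ := hbdd
  refine monotone_nat_of_le_succ fun k => ?_
  by_contra! hdec
  set d := a k - a (k + 1)
  have hd : 0 < d := sub_pos.mpr hdec
  obtain ⟨n, hn⟩ := Archimedean.arch (a k - b) hd
  have hchord := le_add_nsmul_sub_of_concave (a := fun m => a (m + k))
    (fun m => by simpa only [add_right_comm] using hconc (m + k)) (n + 1)
  simp only [zero_add, add_comm 1 k] at hchord
  have : a (n + 1 + k) < b := calc
    a (n + 1 + k) ≤ a k + (n + 1) • (a (k + 1) - a k) := hchord
    _ = a k - n • d - d := by simp only [d, succ_nsmul, nsmul_sub]; abel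
    _ < a k - n • d := sub_lt_self _ hd
    _ ≤ b := sub_le_comm.mp hn
  exact this.not_ge (hb (Set.mem_range_self _))

end ConcaveSequence

theorem ContinuousLinearMap.norm_sq_orbit_concave {𝕜 E : Type*} [NontriviallyNormedField 𝕜]
    [SeminormedAddCommGroup E] [NormedSpace 𝕜 E] (T : E →L[𝕜] E)
    (h : ∀ x : E, ‖(T ^ 2) x‖ ^ 2 + ‖x‖ ^ 2 ≤ 2 * ‖T x‖ ^ 2) (x : E) (n : ℕ) :
    ‖(T ^ (n + 2)) x‖ ^ 2 - ‖(T ^ (n + 1)) x‖ ^ 2 ≤ ‖(T ^ (n + 1)) x‖ ^ 2 - ‖(T ^ n) x‖ ^ 2 := by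
  rw [add_comm n 2, pow_add, pow_succ' T n, mul_apply_eq_comp, mul_apply_eq_comp]
  linarith [h ((T ^ n) x)]

theorem stmt_11_general {H : Type*} [NormedAddCommGroup H] [InnerProductSpace ℂ H]
    (T : H →L[ℂ] H) (h : ∀ x : H, ‖(T ^ 2) x‖ ^ 2 + ‖x‖ ^ 2 ≤ 2 * ‖T x‖ ^ 2) :
    ∀ x : H, ‖x‖ ≤ ‖T x‖ := by
  intro x
  have hmono : Monotone fun n => ‖(T ^ n) x‖ ^ 2 :=
    monotone_of_concave_of_bddBelow (T.norm_sq_orbit_concave h x)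
      ⟨0, Set.forall_mem_range.mpr fun _ => sq_nonneg _⟩
  have hsq : ‖x‖ ^ 2 ≤ ‖T x‖ ^ 2 := by simpa using hmono zero_le_one
  exact (sq_le_sq₀ (norm_nonneg _) (norm_nonneg _)).mp hsq

/-- Every concave operator on a Hilbert space is bounded below: `‖Tx‖ ≥ ‖x‖` for all `x`. -/
theorem stmt_11 {H : Type*} [NormedAddCommGroup H] [InnerProductSpace ℂ H] [CompleteSpace H]
    (T : H →L[ℂ] H) (h : ∀ x : H, ‖(T ^ 2) x‖ ^ 2 + ‖x‖ ^ 2 ≤ 2 * ‖T x‖ ^ 2) :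
    ∀ x : H, ‖x‖ ≤ ‖T x‖ :=
  stmt_11_general T h
end
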